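/- arXiv:math/0501136 — 2 statements merged into one kernel-verified Lean document; each statement's English description precedes it below -/
import Mathlib

section
/- Let K be ℝ or ℂ and let G be an abelian subgroup of GL(n,K). There exists a G-invariant dense open set U ⊆ K^n, whose complement is a union of at most n G-invariant linear subspaces of dimension n−1 or n−2 and in which every orbit is minimal in U, such that: if an orbit O = G(v) is locally dense in K^n (i.e. the closure of O has nonempty interior), then O ⊆ U and, for every connected component C of U with O ∩ C ≠ ∅: (i) C ⊆ closure(O), i.e. O is dense in C; (ii) for every w ∈ U with G(w) ∩ C ≠ ∅, C ⊆ closure(G(w)). -/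
/-- The orbit of a vector `v` under a subgroup `G` of `GL(n, K)` acting linearly on `Kⁿ`. -/
def glOrbit {K : Type*} [Field K] {n : ℕ} (G : Subgroup (Matrix.GeneralLinearGroup (Fin n) K))
    (v : Fin n → K) : Set (Fin n → K) :=
  {w | ∃ A ∈ G, (A : Matrix (Fin n) (Fin n) K).mulVec v = w}

/-!
The group `G` lies in the unit group of the commutative algebra `R ⊆ End(Kⁿ)` it generates. For
each maximal ideal `𝔪` of `R` pick a maximal proper `R`-submodule `V_𝔪 ⊇ 𝔪 • Kⁿ` (proper by
Nakayama). Then `Kⁿ ⧸ V_𝔪 ≅ R ⧸ 𝔪` is a finite field extension of `K`, of degree `1` or `2`, and by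
the Chinese remainder theorem there are at most `n` maximal ideals. On `U = Kⁿ \ ⋃ V_𝔪` the
relation `r • y ∈ U` forces `r` to be a unit.

Minimality: if `gₖ • v → x = h • v ∈ U`, then on `R ∙ v` the `gₖ` converge to the unit `h`, so
`gₖ⁻¹ • x → h⁻¹ • x = v`. A locally dense orbit has `R ∙ v = Kⁿ`, so every point of `U` is `u • v`
with `u` a unit; translating the interior of `closure (G • v)` by such units shows that
`closure (G • v) ∩ U` is open, hence a union of connected components of `U`.
-/

open Function MulAction Pointwise Module

instance Subgroup.continuousConstSMul {M α : Type*} [Group M] [MulAction M α] [TopologicalSpace α]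
    [ContinuousConstSMul M α] (H : Subgroup M) : ContinuousConstSMul H α :=
  ⟨fun h => continuous_const_smul (h : M)⟩

theorem closure_orbit_subset_of_mem_closure_orbit {M α : Type*} [Group M] [MulAction M α]
    [TopologicalSpace α] [ContinuousConstSMul M α] {v x : α} (hx : x ∈ closure (orbit M v)) :
    closure (orbit M x) ⊆ closure (orbit M v) :=
  closure_minimal (by rintro _ ⟨g, rfl⟩; exact smul_closure_orbit_subset g v ⟨x, hx, rfl⟩)
    isClosed_closure

section Units

variable {R E : Type*} [CommRing R] [AddCommGroup E] [Module R E] (G : Subgroup Rˣ)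

theorem exists_units_smul_eq {U : Set E} (hU : ∀ (r : R) (y : E), r • y ∈ U → IsUnit r)
    {v w : E} (hv : Submodule.span R {v} = ⊤) (hw : w ∈ U) : ∃ u : Rˣ, u • v = w := by
  obtain ⟨r, rfl⟩ := Submodule.mem_span_singleton.mp (hv ▸ Submodule.mem_top : w ∈ _)
  exact ⟨(hU r v hw).unit, rfl⟩

variable [TopologicalSpace E] [ContinuousConstSMul R E]

theorem units_smul_closure_orbit_subset (u : Rˣ) (y : E) :
    u • closure (orbit G y) ⊆ closure (orbit G (u • y)) := by
  refine (smul_closure_subset u _).trans (closure_mono ?_)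
  rintro _ ⟨_, ⟨g, rfl⟩, rfl⟩
  exact ⟨g, smul_comm _ _ _⟩

theorem nonempty_interior_closure_orbit_units_smul (u : Rˣ) {v : E}
    (hv : (interior (closure (orbit G v))).Nonempty) :
    (interior (closure (orbit G (u • v)))).Nonempty := by
  rw [← Set.smul_set_nonempty (a := u), ← interior_smul] at hv
  exact hv.mono (interior_mono (units_smul_closure_orbit_subset G u v))

end Units

theorem exists_linearMap_apply_smul_smul_eq (𝕜 : Type*) {R E : Type*} [Field 𝕜] [CommRing R]
    [Algebra 𝕜 R] [AddCommGroup E] [Module 𝕜 E] [Module R E] [IsScalarTower 𝕜 R E] (v : E) :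
    ∃ τ : E →ₗ[𝕜] R, ∀ r : R, τ (r • v) • v = r • v := by
  let ev : R →ₗ[𝕜] E := (LinearMap.toSpanSingleton R E v).restrictScalars 𝕜
  obtain ⟨σ, hσ⟩ := ev.rangeRestrict.exists_rightInverse_of_surjective ev.range_rangeRestrict
  obtain ⟨π, hπ⟩ := (LinearMap.range ev).subtype.exists_leftInverse_of_injective
    (LinearMap.range ev).ker_subtype
  refine ⟨σ ∘ₗ π, fun r => ?_⟩
  have hπr : π (r • v) = ev.rangeRestrict r := by
    simpa [ev] using LinearMap.congr_fun hπ (ev.rangeRestrict r)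
  simpa [hπr, ev] using congr_arg Subtype.val (LinearMap.congr_fun hσ (ev.rangeRestrict r))

theorem IsUnit.ring_inverse_apply_apply {𝕜 E : Type*} [NontriviallyNormedField 𝕜]
    [NormedAddCommGroup E] [NormedSpace 𝕜 E] {P : E →L[𝕜] E} (hP : IsUnit P) (y : E) :
    Ring.inverse P (P y) = y := by
  change (Ring.inverse P * P) y = y
  rw [Ring.inverse_mul_cancel P hP]
  rfl

section FiniteDimensional

variable {𝕜 : Type*} [NontriviallyNormedField 𝕜] [CompleteSpace 𝕜] {E : Type*}
  [NormedAddCommGroup E] [NormedSpace 𝕜 E] [FiniteDimensional 𝕜 E] {R : Type*} [CommRing R]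
  [Algebra 𝕜 R] [Module R E] [IsScalarTower 𝕜 R E] (G : Subgroup Rˣ)

include 𝕜 in
theorem closure_orbit_subset_span (v : E) : closure (orbit G v) ⊆ Submodule.span R {v} := by
  refine closure_minimal ?_ ((Submodule.span R {v}).restrictScalars 𝕜).closed_of_finiteDimensional
  rintro _ ⟨g, rfl⟩
  exact Submodule.smul_mem _ _ (Submodule.mem_span_singleton_self v)

include 𝕜 in
theorem span_singleton_eq_top_of_nonempty_interior {v : E}
    (hv : (interior (closure (orbit G v))).Nonempty) : Submodule.span R {v} = ⊤ := by
  rw [← Submodule.restrictScalars_eq_top_iff 𝕜]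
  exact Submodule.eq_top_of_nonempty_interior' _
    (hv.mono (interior_mono (closure_orbit_subset_span (𝕜 := 𝕜) G v)))

include 𝕜 in
theorem mem_closure_orbit_of_mem_closure_orbit {v x : E} (hx : x ∈ closure (orbit G v))
    (hunit : ∀ r : R, r • v = x → IsUnit r) : v ∈ closure (orbit G x) := by
  have := FiniteDimensional.complete 𝕜 E
  obtain ⟨τ, hτ⟩ := exists_linearMap_apply_smul_smul_eq 𝕜 (R := R) v
  let ρ : R →ₐ[𝕜] E →L[𝕜] E :=
    (Module.End.toContinuousLinearMap E).toAlgHom.comp (Algebra.lsmul 𝕜 𝕜 E)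
  -- `F w` acts on `R ∙ v` as every `g` with `g • v = w`, and `F` is continuous.
  let F : E →ₗ[𝕜] E →L[𝕜] E := ρ.toLinearMap ∘ₗ τ
  have hF (w y : E) : F w y = τ w • y := rfl
  obtain ⟨r, hr⟩ := Submodule.mem_span_singleton.mp (closure_orbit_subset_span (𝕜 := 𝕜) G v hx)
  have hτx : τ x • v = x := by rw [← hr, hτ]
  have hFx : IsUnit (F x) := (hunit _ hτx).map ρ
  let Ψ : E → E := fun w => Ring.inverse (F w) x
  have hΨ : ContinuousAt Ψ x :=
    ((NormedRing.inverse_continuousAt hFx.unit).comp_of_eq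
      F.continuous_of_finiteDimensional.continuousAt hFx.unit_spec.symm).clm_apply
      continuousAt_const
  have hΨx : Ψ x = v := by
    rw [← hFx.ring_inverse_apply_apply v, hF, hτx]
  let s := F ⁻¹' {P | IsUnit P} ∩ orbit G v
  have hxs : x ∈ closure s :=
    (Units.isOpen.preimage F.continuous_of_finiteDimensional).inter_closure ⟨hFx, hx⟩
  have hΨs : Ψ '' s ⊆ orbit G x := by
    rintro _ ⟨_, ⟨hg, ⟨g, rfl⟩⟩, rfl⟩
    refine ⟨g⁻¹, ?_⟩
    let u : Rˣ := g
    change IsUnit (F ((u : R) • v)) at hg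
    change ((u⁻¹ : Rˣ) : R) • x = Ring.inverse (F ((u : R) • v)) x
    have hFg : F ((u : R) • v) (((u⁻¹ : Rˣ) : R) • x) = x := by
      rw [hF, ← hτx]
      calc τ ((u : R) • v) • ((u⁻¹ : Rˣ) : R) • τ x • v
          = (((u⁻¹ : Rˣ) : R) * τ x) • τ ((u : R) • v) • v := by simp only [smul_smul]; ring_nf
        _ = τ x • v := by rw [hτ, smul_smul, mul_right_comm, Units.inv_mul, one_mul]
    rw [← hg.ring_inverse_apply_apply (((u⁻¹ : Rˣ) : R) • x), hFg]
  exact hΨx ▸ closure_mono hΨs (mem_closure_image hΨ hxs)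

variable [ContinuousConstSMul R E] {U : Set E}

include 𝕜 in
theorem closure_orbit_inter_eq_of_mem (hU : ∀ (r : R) (y : E), r • y ∈ U → IsUnit r) {v x : E}
    (hx : x ∈ closure (orbit G v) ∩ U) : closure (orbit G x) ∩ U = closure (orbit G v) ∩ U := by
  refine (Set.inter_subset_inter_left U (closure_orbit_subset_of_mem_closure_orbit hx.1)).antisymm
    (Set.inter_subset_inter_left U (closure_orbit_subset_of_mem_closure_orbit ?_))
  exact mem_closure_orbit_of_mem_closure_orbit (𝕜 := 𝕜) G hx.1 fun r hr => hU r v (hr ▸ hx.2)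

include 𝕜 in
theorem isOpen_closure_orbit_inter (hUo : IsOpen U) (hUd : Dense U)
    (hUu : ∀ u : Rˣ, ∀ y ∈ U, u • y ∈ U) (hU : ∀ (r : R) (y : E), r • y ∈ U → IsUnit r) {v : E}
    (hv : (interior (closure (orbit G v))).Nonempty) : IsOpen (closure (orbit G v) ∩ U) := by
  have hspan := span_singleton_eq_top_of_nonempty_interior (𝕜 := 𝕜) G hv
  obtain ⟨y, hyv, hyU⟩ := hUd.inter_open_nonempty _ isOpen_interior hv
  have hy : y ∈ closure (orbit G v) ∩ U := ⟨interior_subset hyv, hyU⟩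
  rw [isOpen_iff_forall_mem_open]
  intro x hx
  obtain ⟨ux, rfl⟩ := exists_units_smul_eq hU hspan hx.2
  obtain ⟨uy, rfl⟩ := exists_units_smul_eq hU hspan hyU
  have hq : (ux * uy⁻¹) • uy • v = ux • v := by rw [mul_smul, inv_smul_smul]
  refine ⟨(ux * uy⁻¹) • (interior (closure (orbit G v)) ∩ U), ?_,
    (isOpen_interior.inter hUo).smul _, hq ▸ Set.smul_mem_smul_set ⟨hyv, hyU⟩⟩
  rintro _ ⟨z, ⟨hzv, hzU⟩, rfl⟩
  have hz : z ∈ closure (orbit G (uy • v)) :=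
    ((closure_orbit_inter_eq_of_mem (𝕜 := 𝕜) G hU hy).superset ⟨interior_subset hzv, hzU⟩).1
  refine ⟨closure_orbit_subset_of_mem_closure_orbit hx.1 ?_, hUu _ z hzU⟩
  exact hq ▸ units_smul_closure_orbit_subset G _ _ (Set.smul_mem_smul_set hz)

include 𝕜 in
theorem subset_closure_orbit_of_isPreconnected (hUo : IsOpen U) (hUd : Dense U)
    (hUu : ∀ u : Rˣ, ∀ y ∈ U, u • y ∈ U) (hU : ∀ (r : R) (y : E), r • y ∈ U → IsUnit r) {v : E}
    (hv : (interior (closure (orbit G v))).Nonempty) {C : Set E} (hC : IsPreconnected C)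
    (hCU : C ⊆ U) (hCv : (orbit G v ∩ C).Nonempty) : C ⊆ closure (orbit G v) := by
  obtain ⟨y, hyv, hyC⟩ := hCv
  refine (hC.subset_of_closure_inter_subset
    (isOpen_closure_orbit_inter (𝕜 := 𝕜) G hUo hUd hUu hU hv) ⟨y, hyC, subset_closure hyv, hCU hyC⟩
    fun z hz => ⟨?_, hCU hz.2⟩).trans Set.inter_subset_left
  exact closure_minimal Set.inter_subset_left isClosed_closure hz.1

end FiniteDimensional

theorem Submodule.ideal_smul_top_ne_top {R M : Type*} [CommRing R] [AddCommGroup M] [Module R M]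
    [Module.Finite R M] [FaithfulSMul R M] {I : Ideal R} (hI : I ≠ ⊤) :
    I • (⊤ : Submodule R M) ≠ ⊤ := by
  intro h
  obtain ⟨r, hr1, hr0⟩ := Submodule.exists_sub_one_mem_and_smul_eq_zero_of_fg_of_le_smul I ⊤
    (Module.finite_def.mp inferInstance) h.ge
  have hr : r = 0 := FaithfulSMul.eq_of_smul_eq_smul fun m => by rw [zero_smul]; exact hr0 m trivial
  exact hI (I.eq_top_of_isUnit_mem (by simpa [hr] using hr1) isUnit_one.neg)

theorem Submodule.pi_mkQ_ideal_smul_top_surjective {R M ι : Type*} [CommRing R] [AddCommGroup M]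
    [Module R M] [Finite ι] {I : ι → Ideal R} (hI : Pairwise (IsCoprime on I)) :
    Surjective (LinearMap.pi fun i => (I i • (⊤ : Submodule R M)).mkQ) := by
  classical
  have := Fintype.ofFinite ι
  intro y
  choose z hz using fun i => Submodule.mkQ_surjective _ (y i)
  choose e he using fun i => Ideal.pi_quotient_surjective hI (Pi.single i 1)
  refine ⟨∑ i, e i • z i, funext fun j => ?_⟩
  have he' : ∀ i, e i • (I j • (⊤ : Submodule R M)).mkQ (z i) =
      (Pi.single i 1 : ∀ k, R ⧸ I k) j • (I j • (⊤ : Submodule R M)).mkQ (z i) :=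
    fun i => by rw [← he i j]; rfl
  simp only [LinearMap.pi_apply, map_sum, map_smul, he']
  rw [Finset.sum_eq_single j (fun i _ hij => by rw [Pi.single_eq_of_ne hij.symm, zero_smul])
    (by simp), Pi.single_eq_same, one_smul, hz]

section Hyperplanes

variable (K : Type*) [Field K] {R : Type*} [CommRing R] [Algebra K R] {E : Type*} [AddCommGroup E]
  [Module K E] [Module R E] [IsScalarTower K R E] [FiniteDimensional K E] [FaithfulSMul R E]

theorem card_le_finrank_of_isMaximal (s : Finset (Ideal R)) (hs : ∀ I ∈ s, I.IsMaximal) :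
    s.card ≤ finrank K E := by
  have := Module.Finite.of_restrictScalars_finite K R E
  let N : s → Submodule R E := fun I => (I : Ideal R) • ⊤
  have : ∀ I, Nontrivial (E ⧸ N I) := fun I => Submodule.Quotient.nontrivial_iff.mpr
    (Submodule.ideal_smul_top_ne_top (hs I I.2).ne_top)
  have hcop : Pairwise (IsCoprime on fun I : s => (I : Ideal R)) := fun I J hIJ =>
    Ideal.isCoprime_iff_sup_eq.mpr
      ((hs I I.2).coprime_of_ne (hs J J.2) (Subtype.coe_injective.ne hIJ))
  calc s.card = ∑ _ : s, 1 := by simp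
    _ ≤ ∑ I : s, finrank K (E ⧸ N I) := Finset.sum_le_sum fun I _ => Module.finrank_pos
    _ = finrank K (∀ I : s, E ⧸ N I) := (Module.finrank_pi_fintype K).symm
    _ ≤ finrank K E := by
      have hsurj := Submodule.pi_mkQ_ideal_smul_top_surjective (M := E) hcop
      let f : E →ₗ[K] ∀ I : s, E ⧸ N I := (LinearMap.pi fun I => (N I).mkQ).restrictScalars K
      have hf : Surjective f := hsurj
      exact LinearMap.finrank_le_finrank_of_surjective hf

theorem exists_isCoatom_smul_mem_of_not_isUnit :
    ∃ (r : ℕ) (V : Fin r → Submodule R E), r ≤ finrank K E ∧ (∀ k, IsCoatom (V k)) ∧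
      ∀ a : R, ¬IsUnit a → ∀ x : E, ∃ k, a • x ∈ V k := by
  have := Module.Finite.of_restrictScalars_finite K R E
  have hfin : {I : Ideal R | I.IsMaximal}.Finite := by
    by_contra h
    obtain ⟨t, ht, hcard⟩ := Set.Infinite.exists_subset_card_eq h (finrank K E + 1)
    have := card_le_finrank_of_isMaximal K (E := E) t ht
    omega
  have hV (I : hfin.toFinset) : ∃ V : Submodule R E, IsCoatom V ∧ (I : Ideal R) • ⊤ ≤ V :=
    (eq_top_or_exists_le_coatom _).resolve_left
      (Submodule.ideal_smul_top_ne_top (hfin.mem_toFinset.mp I.2).ne_top)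
  choose V hV using hV
  refine ⟨hfin.toFinset.card, V ∘ hfin.toFinset.equivFin.symm,
    card_le_finrank_of_isMaximal K _ (by simp), fun k => (hV _).1, fun a ha x => ?_⟩
  obtain ⟨I, hI, haI⟩ := exists_max_ideal_of_mem_nonunits ha
  refine ⟨hfin.toFinset.equivFin ⟨I, hfin.mem_toFinset.mpr hI⟩, ?_⟩
  simpa using (hV _).2 (Submodule.smul_mem_smul haI trivial)

end Hyperplanes

theorem RCLike.finrank_le_two_of_field (K F : Type*) [RCLike K] [Field F] [Algebra K F]
    [FiniteDimensional K F] : finrank K F ≤ 2 := by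
  let : Algebra ℝ F := ((algebraMap K F).comp (algebraMap ℝ K)).toAlgebra
  have : IsScalarTower ℝ K F := .of_algebraMap_eq fun _ => rfl
  have : FiniteDimensional ℝ F := .trans ℝ K F
  let ψ : F →ₐ[ℝ] ℂ := IsAlgClosed.lift
  calc finrank K F ≤ finrank ℝ K * finrank K F := Nat.le_mul_of_pos_left _ finrank_pos
    _ = finrank ℝ F := finrank_mul_finrank ℝ K F
    _ ≤ finrank ℝ ℂ := LinearMap.finrank_le_finrank_of_injective (f := ψ.toLinearMap) ψ.injective
    _ = 2 := Complex.finrank_real_complex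

section Codimension

variable {K : Type*} [RCLike K] {R : Type*} [CommRing R] [Algebra K R] {E : Type*} [AddCommGroup E]
  [Module K E] [Module R E] [IsScalarTower K R E] [FiniteDimensional K E] {V : Submodule R E}

theorem finrank_quotient_le_two_of_isCoatom (hV : IsCoatom V) :
    finrank K (E ⧸ V.restrictScalars K) ≤ 2 := by
  obtain ⟨I, hI, ⟨e⟩⟩ := isSimpleModule_iff_quot_maximal.mp (isSimpleModule_iff_isCoatom.mpr hV)
  let := Ideal.Quotient.field I
  let e' := (Submodule.Quotient.restrictScalarsEquiv K V).trans (e.restrictScalars K)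
  have : FiniteDimensional K (R ⧸ I) := Module.Finite.equiv e'
  exact e'.finrank_eq ▸ RCLike.finrank_le_two_of_field K (R ⧸ I)

theorem finrank_restrictScalars_eq_of_isCoatom (hV : IsCoatom V) :
    finrank K (V.restrictScalars K) = finrank K E - 1 ∨
      finrank K (V.restrictScalars K) = finrank K E - 2 := by
  have : Nontrivial (E ⧸ V.restrictScalars K) := Submodule.Quotient.nontrivial_iff.mpr
    (by simpa [← Submodule.restrictScalars_eq_top_iff K] using hV.1)
  have := Submodule.finrank_quotient_add_finrank (V.restrictScalars K)
  have := finrank_quotient_le_two_of_isCoatom (K := K) hV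
  have : 0 < finrank K (E ⧸ V.restrictScalars K) := finrank_pos
  omega

end Codimension

theorem Submodule.dense_compl_iUnion_of_ne_top {𝕜 E ι : Type*} [NontriviallyNormedField 𝕜]
    [CompleteSpace 𝕜] [NormedAddCommGroup E] [NormedSpace 𝕜 E] [FiniteDimensional 𝕜 E]
    [Countable ι] (V : ι → Submodule 𝕜 E) (hV : ∀ i, V i ≠ ⊤) : Dense (⋃ i, (V i : Set E))ᶜ := by
  have := FiniteDimensional.complete 𝕜 E
  rw [Set.compl_iUnion]
  refine dense_iInter_of_isOpen (fun i => (V i).closed_of_finiteDimensional.isOpen_compl)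
    fun i => ?_
  refine interior_eq_empty_iff_dense_compl.mp (Set.not_nonempty_iff_eq_empty.mp fun h => ?_)
  exact hV i ((V i).eq_top_of_nonempty_interior' h)

theorem exists_isOpen_dense_minimal_orbits {K E R : Type*} [RCLike K] [NormedAddCommGroup E]
    [NormedSpace K E] [FiniteDimensional K E] [CommRing R] [Algebra K R] [Module R E]
    [IsScalarTower K R E] [FaithfulSMul R E] [ContinuousConstSMul R E] (G : Subgroup Rˣ) :
    ∃ U : Set E, IsOpen U ∧ Dense U ∧ (∀ v ∈ U, orbit G v ⊆ U) ∧
      (∃ (r : ℕ) (V : Fin r → Submodule R E), r ≤ finrank K E ∧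
        (∀ k, finrank K ((V k).restrictScalars K) = finrank K E - 1 ∨
          finrank K ((V k).restrictScalars K) = finrank K E - 2) ∧
        Uᶜ = ⋃ k, (V k : Set E)) ∧
      (∀ v, ∀ x ∈ closure (orbit G v) ∩ U,
        closure (orbit G x) ∩ U = closure (orbit G v) ∩ U) ∧
      (∀ v, (interior (closure (orbit G v))).Nonempty →
        orbit G v ⊆ U ∧
        ∀ C : Set E, (∃ x ∈ U, C = connectedComponentIn U x) → (orbit G v ∩ C).Nonempty →
          C ⊆ closure (orbit G v) ∧
          ∀ w ∈ U, (orbit G w ∩ C).Nonempty → C ⊆ closure (orbit G w)) := by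
  obtain ⟨r, V, hr, hV, hnonunit⟩ := exists_isCoatom_smul_mem_of_not_isUnit K (R := R) (E := E)
  set U := (⋃ k, (V k : Set E))ᶜ
  have hUo : IsOpen U := (isClosed_iUnion_of_finite fun k =>
    ((V k).restrictScalars K).closed_of_finiteDimensional).isOpen_compl
  have hUd : Dense U := Submodule.dense_compl_iUnion_of_ne_top (fun k => (V k).restrictScalars K)
    fun k => by simpa [Submodule.restrictScalars_eq_top_iff] using (hV k).1
  have hUu (u : Rˣ) : ∀ y ∈ U, u • y ∈ U := by
    simp only [U, Set.mem_compl_iff, Set.mem_iUnion, SetLike.mem_coe, not_exists]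
    exact fun y hy k hk => hy k ((Submodule.smul_mem_iff' _ u).mp hk)
  have hU (a : R) (y : E) (hay : a • y ∈ U) : IsUnit a := by
    by_contra ha
    obtain ⟨k, hk⟩ := hnonunit a ha y
    exact hay (Set.mem_iUnion.mpr ⟨k, hk⟩)
  have hGU : ∀ v ∈ U, orbit G v ⊆ U := by
    rintro v hv _ ⟨g, rfl⟩
    exact hUu g v hv
  refine ⟨U, hUo, hUd, hGU, ⟨r, V, hr, fun k => finrank_restrictScalars_eq_of_isCoatom (hV k),
    compl_compl _⟩, fun v x hx => closure_orbit_inter_eq_of_mem (𝕜 := K) G hU hx, fun v hv => ?_⟩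
  have hspan := span_singleton_eq_top_of_nonempty_interior (𝕜 := K) G hv
  obtain ⟨w, hw⟩ := hUd.nonempty
  obtain ⟨u, rfl⟩ := exists_units_smul_eq hU hspan hw
  refine ⟨hGU v (inv_smul_smul u v ▸ hUu u⁻¹ _ hw), ?_⟩
  rintro C ⟨x, -, rfl⟩ hCv
  have hC := isPreconnected_connectedComponentIn (x := x) (F := U)
  have hCU := connectedComponentIn_subset U x
  refine ⟨subset_closure_orbit_of_isPreconnected (𝕜 := K) G hUo hUd hUu hU hv hC hCU hCv,
    fun y hy hCy => ?_⟩
  obtain ⟨u', rfl⟩ := exists_units_smul_eq hU hspan hy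
  exact subset_closure_orbit_of_isPreconnected (𝕜 := K) G hUo hUd hUu hU
    (nonempty_interior_closure_orbit_units_smul G u' hv) hC hCU hCy

theorem exists_subgroup_units_orbit_eq_glOrbit {K : Type*} [Field K] {n : ℕ}
    (G : Subgroup (Matrix.GeneralLinearGroup (Fin n) K))
    (R : Subalgebra K (Module.End K (Fin n → K)))
    (hR : ∀ A ∈ G, Matrix.toLinAlgEquiv' (A : Matrix (Fin n) (Fin n) K) ∈ R) :
    ∃ Γ : Subgroup Rˣ, ∀ v, orbit Γ v = glOrbit G v := by
  let ψ : G →* R :=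
    { toFun := fun A => ⟨Matrix.toLinAlgEquiv' ((A : Matrix.GeneralLinearGroup (Fin n) K) :
        Matrix (Fin n) (Fin n) K), hR A A.2⟩
      map_one' := by ext1; simp
      map_mul' := fun A B => by ext1; simp }
  refine ⟨ψ.toHomUnits.range, fun v => Set.ext fun w => ⟨?_, ?_⟩⟩
  · rintro ⟨⟨_, A, rfl⟩, rfl⟩
    exact ⟨A, A.2, rfl⟩
  · rintro ⟨A, hA, rfl⟩
    exact ⟨⟨ψ.toHomUnits ⟨A, hA⟩, ⟨A, hA⟩, rfl⟩, rfl⟩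

/-- Let `K = ℝ` or `ℂ` and `G` an abelian subgroup of `GL(n, K)`. There is a `G`-invariant dense
open set `U ⊆ Kⁿ` whose complement is a union of at most `n` `G`-invariant subspaces of
dimension `n-1` or `n-2`, in which every orbit is minimal in `U`, such that: if an orbit
`O = G(v)` is locally dense in `Kⁿ`, then `O ⊆ U` and for every connected component `C` of `U`
meeting `O`: (i) `O` is dense in `C`; (ii) every orbit of a point of `U` meeting `C` is dense
in `C`. -/
theorem locally_dense_orbit {K : Type*} [RCLike K] (n : ℕ)
    (G : Subgroup (Matrix.GeneralLinearGroup (Fin n) K))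
    (hGcomm : ∀ A ∈ G, ∀ B ∈ G, A * B = B * A) :
    ∃ U : Set (Fin n → K),
      IsOpen U ∧ Dense U ∧
      (∀ A ∈ G, ∀ v ∈ U, (A : Matrix (Fin n) (Fin n) K).mulVec v ∈ U) ∧
      (∃ (r : ℕ) (V : Fin r → Submodule K (Fin n → K)), r ≤ n ∧
        (∀ k, ∀ A ∈ G, ∀ x ∈ V k, (A : Matrix (Fin n) (Fin n) K).mulVec x ∈ V k) ∧
        (∀ k, Module.finrank K (V k) = n - 1 ∨ Module.finrank K (V k) = n - 2) ∧
        Uᶜ = ⋃ k, (V k : Set (Fin n → K))) ∧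
      (∀ v : Fin n → K, glOrbit G v ⊆ U →
        ∀ x ∈ closure (glOrbit G v) ∩ U,
          closure (glOrbit G x) ∩ U = closure (glOrbit G v) ∩ U) ∧
      (∀ v : Fin n → K, (interior (closure (glOrbit G v))).Nonempty →
        glOrbit G v ⊆ U ∧
        (∀ C : Set (Fin n → K), (∃ x ∈ U, C = connectedComponentIn U x) →
          (glOrbit G v ∩ C).Nonempty →
          C ⊆ closure (glOrbit G v) ∧
          (∀ w ∈ U, (glOrbit G w ∩ C).Nonempty → C ⊆ closure (glOrbit G w)))) := by
  let S := (fun A : Matrix.GeneralLinearGroup (Fin n) K =>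
    Matrix.toLinAlgEquiv' (A : Matrix (Fin n) (Fin n) K)) '' G
  have hS : ∀ a ∈ S, ∀ b ∈ S, a * b = b * a := by
    rintro _ ⟨A, hA, rfl⟩ _ ⟨B, hB, rfl⟩
    rw [← map_mul, ← map_mul, ← Units.val_mul, ← Units.val_mul, hGcomm A hA B hB]
  -- Found before the `CommRing` instance below is in scope; with it, this search times out.
  have : IsScalarTower K (Algebra.adjoin K S) (Fin n → K) := inferInstance
  let : CommRing (Algebra.adjoin K S) :=
    { (Algebra.adjoin K S).toRing with
      mul_comm := (Algebra.isMulCommutative_adjoin K hS).is_comm.comm }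
  have : ContinuousConstSMul (Algebra.adjoin K S) (Fin n → K) :=
    ⟨fun r => (r : Module.End K (Fin n → K)).continuous_of_finiteDimensional⟩
  obtain ⟨Γ, hΓ⟩ := exists_subgroup_units_orbit_eq_glOrbit G (Algebra.adjoin K S)
    fun A hA => Algebra.subset_adjoin ⟨A, hA, rfl⟩
  obtain ⟨U, hUo, hUd, hUG, ⟨r, V, hr, hV, hUc⟩, hmin, hloc⟩ :=
    exists_isOpen_dense_minimal_orbits (K := K) (E := Fin n → K) (R := Algebra.adjoin K S) Γ
  simp only [hΓ, Module.finrank_fin_fun] at hUG hr hV hmin hloc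
  refine ⟨U, hUo, hUd, fun A hA v hv => hUG v hv ⟨A, hA, rfl⟩,
    ⟨r, fun k => (V k).restrictScalars K, hr, fun k A hA x hx => ?_, hV, hUc⟩,
    fun v _ => hmin v, hloc⟩
  exact (V k).smul_mem ⟨_, Algebra.subset_adjoin ⟨A, hA, rfl⟩⟩ hx
end

section
/- Let K be ℝ or ℂ and let G be an abelian subgroup of GL(n,K). If G has an orbit dense in K^n, then there exists a G-invariant dense open set U ⊆ K^n, whose complement is a union of at most n G-invariant linear subspaces of dimension n−1 or n−2, such that for every u ∈ U the orbit G(u) is dense in K^n. -/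
/-!
Let `A` be the (commutative) subalgebra of matrices generated by `G`. If `G v` is dense, then `v`
is a cyclic vector of `A`: `A v` is a closed subspace containing `G v`. As `A` is commutative,
`a ↦ a v` is then an isomorphism `A ≃ Kⁿ` of `A`-modules. Under it the vectors `u` with
`A u = Kⁿ` correspond to the units `c` of `A`, and their orbits `G u = c (G v)` are dense. The
other vectors correspond to the non-units, i.e. to the union of the maximal ideals `m` of the
Artinian ring `A`; they give the subspaces `m Kⁿ` of codimension `[A/m : K] ∈ {1, 2}`, and by
the Chinese remainder theorem there are at most `dim A = n` of them.
-/

open Module Submodule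
open scoped IsMulCommutative

theorem RCLike.finrank_extension_le_two (K L : Type*) [RCLike K] [Field L] [Algebra K L]
    [FiniteDimensional K L] : finrank K L ≤ 2 := by
  let _ : Algebra ℝ L := ((algebraMap K L).comp (algebraMap ℝ K)).toAlgebra
  have : IsScalarTower ℝ K L := IsScalarTower.of_algebraMap_eq fun _ => rfl
  have : FiniteDimensional ℝ L := FiniteDimensional.trans ℝ K L
  have : Algebra.IsAlgebraic ℝ L := Algebra.IsAlgebraic.of_finite ℝ L
  let f : L →ₐ[ℝ] ℂ := IsAlgClosed.lift
  have hL : finrank ℝ L ≤ 2 := Complex.finrank_real_complex ▸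
    LinearMap.finrank_le_finrank_of_injective (f := f.toLinearMap) f.injective
  have hK : 0 < finrank ℝ K := finrank_pos
  have := finrank_mul_finrank ℝ K L
  nlinarith

theorem card_maximalSpectrum_le_finrank (K A : Type*) [Field K] [CommRing A] [Algebra K A]
    [FiniteDimensional K A] : Nat.card (MaximalSpectrum A) ≤ finrank K A := by
  have := IsArtinianRing.of_finite K A
  have := Fintype.ofFinite (MaximalSpectrum A)
  have hsurj := Ideal.pi_mkQ_surjective (I := fun m : MaximalSpectrum A => m.asIdeal)
    fun _ _ => MaximalSpectrum.isCoprime_of_ne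
  calc Nat.card (MaximalSpectrum A) = ∑ _m : MaximalSpectrum A, 1 := by simp
    _ ≤ ∑ m : MaximalSpectrum A, finrank K (A ⧸ m.asIdeal) := by
      gcongr with m
      have := Ideal.Quotient.nontrivial_iff.mpr m.isMaximal.ne_top
      exact finrank_pos
    _ = finrank K (Π m : MaximalSpectrum A, A ⧸ m.asIdeal) := (finrank_pi_fintype K).symm
    _ ≤ finrank K A := LinearMap.finrank_le_finrank_of_surjective
        (f := (LinearMap.pi fun m : MaximalSpectrum A => m.asIdeal.mkQ).restrictScalars K) hsurj

namespace Submodule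

variable {A M : Type*} [CommRing A] [AddCommGroup M] [Module A M] {v : M}

theorem exists_smul_eq_of_span_singleton_eq_top (hv : span A {v} = ⊤) (u : M) :
    ∃ c : A, c • v = u :=
  mem_span_singleton.mp (hv ▸ mem_top)

variable [FaithfulSMul A M]

theorem smul_left_injective_of_span_singleton_eq_top (hv : span A {v} = ⊤) :
    Function.Injective (· • v : A → M) := fun a b hab =>
  eq_of_smul_eq_smul fun u => by
    obtain ⟨c, rfl⟩ := exists_smul_eq_of_span_singleton_eq_top hv u
    rw [smul_comm a c, smul_comm b c]
    exact congrArg (c • ·) hab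

noncomputable def equivOfSpanSingletonEqTop (hv : span A {v} = ⊤) : A ≃ₗ[A] M :=
  LinearEquiv.ofBijective (LinearMap.toSpanSingleton A M v)
    ⟨smul_left_injective_of_span_singleton_eq_top hv, exists_smul_eq_of_span_singleton_eq_top hv⟩

theorem span_singleton_smul_eq_top_iff (hv : span A {v} = ⊤) {c : A} :
    span A {c • v} = ⊤ ↔ IsUnit c := by
  refine ⟨fun hcv => ?_, fun hc => (span_singleton_smul_eq hc v).trans hv⟩
  obtain ⟨d, hd⟩ := exists_smul_eq_of_span_singleton_eq_top hcv v
  refine IsUnit.of_mul_eq_one_right d (smul_left_injective_of_span_singleton_eq_top hv ?_)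
  simpa [mul_smul] using hd

theorem smul_mem_ideal_smul_top_iff (hv : span A {v} = ⊤) (I : Ideal A) {c : A} :
    c • v ∈ I • (⊤ : Submodule A M) ↔ c ∈ I := by
  rw [← hv, mem_smul_span_singleton]
  exact ⟨fun ⟨a, ha, hav⟩ => smul_left_injective_of_span_singleton_eq_top hv hav ▸ ha,
    fun hc => ⟨c, hc, rfl⟩⟩

theorem compl_setOf_span_singleton_eq_top (hv : span A {v} = ⊤) :
    {u : M | span A {u} = ⊤}ᶜ = ⋃ m : MaximalSpectrum A, (m.asIdeal • ⊤ : Submodule A M) := by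
  ext u
  obtain ⟨c, rfl⟩ := exists_smul_eq_of_span_singleton_eq_top hv u
  simp only [Set.mem_compl_iff, Set.mem_ofPred_eq, Set.mem_iUnion, SetLike.mem_coe,
    span_singleton_smul_eq_top_iff hv, smul_mem_ideal_smul_top_iff hv]
  refine ⟨fun hc => ?_, fun ⟨m, hcm⟩ hc => m.isMaximal.ne_top (Ideal.eq_top_of_isUnit_mem _ hcm hc)⟩
  obtain ⟨m, hm, hcm⟩ := exists_max_ideal_of_mem_nonunits hc
  exact ⟨⟨m, hm⟩, hcm⟩

section Field

variable {K : Type*} [Field K] [Algebra K A] [Module K M] [IsScalarTower K A M]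

theorem finrank_eq_of_span_singleton_eq_top (hv : span A {v} = ⊤) :
    finrank K A = finrank K M :=
  ((equivOfSpanSingletonEqTop hv).restrictScalars K).finrank_eq

theorem finiteDimensional_of_span_singleton_eq_top [FiniteDimensional K M]
    (hv : span A {v} = ⊤) : FiniteDimensional K A :=
  Module.Finite.equiv ((equivOfSpanSingletonEqTop hv).restrictScalars K).symm

theorem finrank_ideal_smul_top_add_finrank_quotient [FiniteDimensional K M]
    (hv : span A {v} = ⊤) (I : Ideal A) :
    finrank K ((I • ⊤ : Submodule A M).restrictScalars K) + finrank K (A ⧸ I) = finrank K M := by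
  let e := equivOfSpanSingletonEqTop hv
  have hI : (I • ⊤ : Submodule A M) = map (e : A →ₗ[A] M) I := by
    rw [← LinearEquiv.range e, LinearMap.range_eq_map, ← map_smul'', Ideal.smul_eq_mul,
      Ideal.mul_top]
  have hIK : finrank K ((I • ⊤ : Submodule A M).restrictScalars K) =
      finrank K (I.restrictScalars K) := by
    rw [hI]
    exact LinearEquiv.finrank_map_eq (e.restrictScalars K) (I.restrictScalars K)
  have := finiteDimensional_of_span_singleton_eq_top (K := K) hv
  rw [hIK, ← (Quotient.restrictScalarsEquiv K I).finrank_eq, add_comm,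
    finrank_quotient_add_finrank, finrank_eq_of_span_singleton_eq_top hv]

end Field

theorem finrank_maximal_smul_top_eq_sub_one_or_sub_two {K : Type*} [RCLike K] [Algebra K A]
    [Module K M] [IsScalarTower K A M] [FiniteDimensional K M] (hv : span A {v} = ⊤)
    (m : MaximalSpectrum A) :
    finrank K ((m.asIdeal • ⊤ : Submodule A M).restrictScalars K) = finrank K M - 1 ∨
      finrank K ((m.asIdeal • ⊤ : Submodule A M).restrictScalars K) = finrank K M - 2 := by
  have := finrank_ideal_smul_top_add_finrank_quotient (K := K) hv m.asIdeal
  let _ := Ideal.Quotient.field m.asIdeal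
  have := finiteDimensional_of_span_singleton_eq_top (K := K) hv
  have := RCLike.finrank_extension_le_two K (A ⧸ m.asIdeal)
  have : 0 < finrank K (A ⧸ m.asIdeal) := finrank_pos
  omega

theorem isOpen_setOf_span_singleton_eq_top {K : Type*} [NontriviallyNormedField K]
    [CompleteSpace K] [Algebra K A] [Module K M] [IsScalarTower K A M] [FiniteDimensional K M]
    [TopologicalSpace M] [IsTopologicalAddGroup M] [ContinuousSMul K M] [T2Space M]
    (hv : span A {v} = ⊤) : IsOpen {u : M | span A {u} = ⊤} := by
  have := finiteDimensional_of_span_singleton_eq_top (K := K) hv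
  have := IsArtinianRing.of_finite K A
  rw [← isClosed_compl_iff, compl_setOf_span_singleton_eq_top hv]
  exact isClosed_iUnion_of_finite fun m =>
    ((m.asIdeal • ⊤ : Submodule A M).restrictScalars K).closed_of_finiteDimensional

end Submodule

instance Matrix.instFaithfulSMulMulVec {ι R : Type*} [Fintype ι] [DecidableEq ι] [Semiring R] :
    FaithfulSMul (Matrix ι ι R) (ι → R) :=
  ⟨Matrix.ext_iff_smul.mpr⟩

section glOrbit

open Matrix

variable {K : Type*} {n : ℕ}

theorem glOrbit_mulVec_eq_image [Field K] {G : Subgroup (GL (Fin n) K)}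
    {c : Matrix (Fin n) (Fin n) K} (hc : ∀ g ∈ G, Commute (g : Matrix (Fin n) (Fin n) K) c)
    (v : Fin n → K) : glOrbit G (c *ᵥ v) = (c *ᵥ ·) '' glOrbit G v := by
  ext w
  constructor
  · rintro ⟨g, hg, rfl⟩
    exact ⟨g *ᵥ v, ⟨g, hg, rfl⟩, by simp only [mulVec_mulVec, (hc g hg).eq]⟩
  · rintro ⟨_, ⟨g, hg, rfl⟩, rfl⟩
    exact ⟨g, hg, by simp only [mulVec_mulVec, (hc g hg).eq]⟩

theorem Dense.glOrbit_mulVec [Field K] [TopologicalSpace K] [IsTopologicalRing K]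
    {G : Subgroup (GL (Fin n) K)} {v : Fin n → K} (hv : Dense (glOrbit G v))
    {c : Matrix (Fin n) (Fin n) K} (hc : IsUnit c)
    (hcomm : ∀ g ∈ G, Commute (g : Matrix (Fin n) (Fin n) K) c) :
    Dense (glOrbit G (c *ᵥ v)) := by
  rw [glOrbit_mulVec_eq_image hcomm]
  exact (mulVec_surjective_iff_isUnit.mpr hc).denseRange.dense_image
    (continuous_const.matrix_mulVec continuous_id) hv

theorem span_singleton_eq_top_of_dense_glOrbit [RCLike K] {G : Subgroup (GL (Fin n) K)}
    (A : Subalgebra K (Matrix (Fin n) (Fin n) K))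
    (hGA : ∀ g ∈ G, (g : Matrix (Fin n) (Fin n) K) ∈ A) {v : Fin n → K}
    (hv : Dense (glOrbit G v)) : span A {v} = ⊤ := by
  let W := (span A {v}).restrictScalars K
  have hW : glOrbit G v ⊆ W := by
    rintro _ ⟨g, hg, rfl⟩
    exact mem_span_singleton.mpr ⟨⟨g, hGA g hg⟩, rfl⟩
  have := W.closed_of_finiteDimensional.closure_subset_iff.mpr hW
  rw [hv.closure_eq] at this
  exact eq_top_iff'.mpr fun u => this (Set.mem_univ u)

end glOrbit

section glAdjoin

variable {K : Type*} [Field K] {n : ℕ}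

def glAdjoin (G : Subgroup (GL (Fin n) K)) : Subalgebra K (Matrix (Fin n) (Fin n) K) :=
  Algebra.adjoin K ((↑) '' (G : Set (GL (Fin n) K)))

variable {G : Subgroup (GL (Fin n) K)}

theorem coe_mem_glAdjoin {g : GL (Fin n) K} (hg : g ∈ G) :
    (g : Matrix (Fin n) (Fin n) K) ∈ glAdjoin G :=
  Algebra.subset_adjoin ⟨g, hg, rfl⟩

theorem isUnit_glAdjoin_mk {g : GL (Fin n) K} (hg : g ∈ G) :
    IsUnit (⟨g, coe_mem_glAdjoin hg⟩ : glAdjoin G) :=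
  ⟨⟨_, ⟨_, coe_mem_glAdjoin (inv_mem hg)⟩, Subtype.ext g.mul_inv, Subtype.ext g.inv_mul⟩, rfl⟩

theorem isMulCommutative_glAdjoin (hGcomm : ∀ A ∈ G, ∀ B ∈ G, A * B = B * A) :
    IsMulCommutative (glAdjoin G) :=
  Algebra.isMulCommutative_adjoin K <| by
    rintro _ ⟨g, hg, rfl⟩ _ ⟨h, hh, rfl⟩
    exact congrArg Units.val (hGcomm g hg h hh)

end glAdjoin

theorem dense_glOrbit_of_span_singleton_eq_top {K : Type*} [RCLike K] {n : ℕ}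
    {G : Subgroup (GL (Fin n) K)} (hGcomm : ∀ A ∈ G, ∀ B ∈ G, A * B = B * A)
    {v : Fin n → K} (hv : Dense (glOrbit G v)) {u : Fin n → K}
    (hu : span (glAdjoin G) {u} = ⊤) : Dense (glOrbit G u) := by
  have := isMulCommutative_glAdjoin hGcomm
  have hcyc := span_singleton_eq_top_of_dense_glOrbit _ (fun _ => coe_mem_glAdjoin) hv
  obtain ⟨c, rfl⟩ := exists_smul_eq_of_span_singleton_eq_top hcyc u
  have hc := (span_singleton_smul_eq_top_iff hcyc).mp hu
  exact hv.glOrbit_mulVec (hc.map (glAdjoin G).val) fun g hg =>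
    (Commute.all (⟨g, coe_mem_glAdjoin hg⟩ : glAdjoin G) c).map (glAdjoin G).val

/-- Let `K = ℝ` or `ℂ` and let `G` be an abelian subgroup of `GL(n, K)`. If `G` has an orbit
dense in `Kⁿ`, then there is a `G`-invariant dense open set `U ⊆ Kⁿ`, whose complement is a
union of at most `n` `G`-invariant linear subspaces of dimension `n-1` or `n-2`, such that
every orbit of a point of `U` is dense in `Kⁿ`. -/
theorem dense_orbit {K : Type*} [RCLike K] (n : ℕ)
    (G : Subgroup (Matrix.GeneralLinearGroup (Fin n) K))
    (hGcomm : ∀ A ∈ G, ∀ B ∈ G, A * B = B * A)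
    (hdense : ∃ v : Fin n → K, Dense (glOrbit G v)) :
    ∃ U : Set (Fin n → K),
      IsOpen U ∧ Dense U ∧
      (∀ A ∈ G, ∀ v ∈ U, (A : Matrix (Fin n) (Fin n) K).mulVec v ∈ U) ∧
      (∃ (r : ℕ) (V : Fin r → Submodule K (Fin n → K)), r ≤ n ∧
        (∀ k, ∀ A ∈ G, ∀ x ∈ V k, (A : Matrix (Fin n) (Fin n) K).mulVec x ∈ V k) ∧
        (∀ k, Module.finrank K (V k) = n - 1 ∨ Module.finrank K (V k) = n - 2) ∧
        Uᶜ = ⋃ k, (V k : Set (Fin n → K))) ∧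
      (∀ u ∈ U, Dense (glOrbit G u)) := by
  obtain ⟨v, hv⟩ := hdense
  have := isMulCommutative_glAdjoin hGcomm
  have hcyc := span_singleton_eq_top_of_dense_glOrbit _ (fun _ => coe_mem_glAdjoin) hv
  have hfinrank : finrank K (glAdjoin G) = n := by
    rw [finrank_eq_of_span_singleton_eq_top hcyc, finrank_fin_fun]
  have := IsArtinianRing.of_finite K (glAdjoin G)
  let σ := (Finite.equivFin (MaximalSpectrum (glAdjoin G))).symm
  refine ⟨{u | span (glAdjoin G) {u} = ⊤}, isOpen_setOf_span_singleton_eq_top (K := K) hcyc,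
    hv.mono ?_, fun g hg u hu => (span_singleton_smul_eq (isUnit_glAdjoin_mk hg) u).trans hu,
    ⟨_, fun k => ((σ k).asIdeal • ⊤ : Submodule (glAdjoin G) (Fin n → K)).restrictScalars K,
      (card_maximalSpectrum_le_finrank K _).trans_eq hfinrank,
      fun k g hg x hx => Submodule.smul_mem _ (⟨g, coe_mem_glAdjoin hg⟩ : glAdjoin G) hx,
      fun k => by simpa only [finrank_fin_fun] using
        finrank_maximal_smul_top_eq_sub_one_or_sub_two (K := K) hcyc (σ k), ?_⟩,
    fun u hu => dense_glOrbit_of_span_singleton_eq_top hGcomm hv hu⟩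
  · rintro _ ⟨g, hg, rfl⟩
    exact (span_singleton_smul_eq (isUnit_glAdjoin_mk hg) v).trans hcyc
  · rw [compl_setOf_span_singleton_eq_top hcyc, ← σ.surjective.iUnion_comp]
    rfl
end
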